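/- Let F_1, …, F_D be N×N complex Hermitian matrices. Then the minimum over x ∈ [−1,1]^D of λ_max(I + ∑_{p=1}^D x_p F_p) equals the supremum over all N×N density matrices Z of the quantity 1 − ∑_{p=1}^D |Tr(Z F_p)|. (Both sides are attained; in particular Tr(Z F_p) is real since Z and F_p are Hermitian.) -/

import Mathlib

open Matrix
open scoped ComplexOrder

/-!
Let `C ⊆ ℝ^D` be the image of the compact convex set of density matrices under
`Z ↦ (Re Tr(Z F_p))_p`. Since `λ_max(M) = max_Z Re Tr(Z M)` over density matrices, the left-hand
side is `1 + min_{‖x‖_∞ ≤ 1} max_{c ∈ C} ⟨x, c⟩` and the right-hand side is `1 - min_{c ∈ C} ‖c‖₁`.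
The bound `⟨x, c⟩ ≥ -‖c‖₁` gives one inequality. For the other, a hyperplane separating `C` from the
open `ℓ¹`-ball of radius `r = min_C ‖·‖₁` has a normal vector which, rescaled, is a point `x` of the
cube with `⟨x, c⟩ ≤ -r` on all of `C`.
-/

noncomputable def lamMax {N : ℕ} {M : Matrix (Fin N) (Fin N) ℂ}
    (hM : M.IsHermitian) : ℝ :=
  ⨆ i, hM.eigenvalues i

theorem exists_abs_le_one_sum_mul_le_neg {ι : Type*} [Fintype ι] {C : Set (ι → ℝ)}
    (hC : Convex ℝ C) {r : ℝ} (hr : ∀ c ∈ C, r ≤ ∑ i, |c i|) :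
    ∃ x : ι → ℝ, (∀ i, |x i| ≤ 1) ∧ ∀ c ∈ C, ∑ i, x i * c i ≤ -r := by
  classical
  rcases le_or_gt r 0 with hr0 | hr0
  · exact ⟨0, by simp, fun c _ => by simpa using hr0⟩
  set ball : Set (ι → ℝ) := (WithLp.toLp 1) ⁻¹' Metric.ball 0 r
  have mem_ball a : a ∈ ball ↔ ∑ i, |a i| < r := by simp [ball, PiLp.norm_eq_of_L1]
  obtain ⟨f, s, hf_ball, hf_C⟩ := geometric_hahn_banach_open
    ((convex_ball 0 r).linear_preimage (WithLp.linearEquiv 1 ℝ (ι → ℝ)).symm.toLinearMap)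
    (Metric.isOpen_ball.preimage (PiLp.continuous_toLp 1 _)) hC
    (Set.disjoint_left.mpr fun a ha haC => (mem_ball a).mp ha |>.not_ge (hr a haC))
  set y : ι → ℝ := fun i => f (Pi.single i 1)
  have hf c : f c = ∑ i, c i * y i := by
    conv_lhs => rw [← Finset.univ_sum_single c]
    refine (map_sum f _ _).trans (Finset.sum_congr rfl fun i _ => ?_)
    rw [← smul_eq_mul, ← map_smul, ← Pi.single_smul, smul_eq_mul, mul_one]
  have hs : 0 < s := by simpa using hf_ball 0 ((mem_ball 0).mpr (by simpa using hr0))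
  -- Otherwise the point `(s / y i) e_i` of the ball would have `f = s`.
  have hy i : r * |y i| ≤ s := by
    by_contra! h
    have hyi : y i ≠ 0 := by rintro h0; simp [h0] at h; linarith
    have hmem : Pi.single i (s / y i) ∈ ball := by
      rw [mem_ball]
      simpa [Pi.single_apply, apply_ite abs, abs_div, abs_of_pos hs,
        div_lt_iff₀ (abs_pos.mpr hyi), mul_comm] using h
    have := hf_ball _ hmem
    rw [hf, Finset.sum_eq_single i (fun j _ hj => by simp [hj]) (by simp)] at this
    simp [div_mul_cancel₀ _ hyi] at this
  refine ⟨fun i => -(r / s * y i), fun i => ?_, fun c hc => ?_⟩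
  · rw [abs_neg, abs_mul, abs_of_pos (div_pos hr0 hs), div_mul_eq_mul_div, div_le_one hs]
    exact hy i
  · calc ∑ i, -(r / s * y i) * c i = -(r / s * f c) := by
          simp only [hf, Finset.mul_sum, ← Finset.sum_neg_distrib]
          exact Finset.sum_congr rfl fun i _ => by ring
      _ ≤ -(r / s * s) := by gcongr; exact hf_C c hc
      _ = -r := by field_simp

namespace Matrix

variable {n 𝕜 : Type*} [RCLike 𝕜]

theorem PosSemidef.trace_mul_nonneg [Fintype n] {A B : Matrix n n 𝕜} (hA : A.PosSemidef)
    (hB : B.PosSemidef) : 0 ≤ (A * B).trace := by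
  classical
  open scoped MatrixOrder in
  obtain ⟨C, rfl⟩ := CStarAlgebra.nonneg_iff_eq_star_mul_self.mp hB.nonneg
  rw [star_eq_conjTranspose, ← mul_assoc, trace_mul_cycle]
  exact (hA.mul_mul_conjTranspose_same C).trace_nonneg

theorem PosSemidef.norm_apply_sq_le {A : Matrix n n 𝕜} (hA : A.PosSemidef) (i j : n) :
    ‖A i j‖ ^ 2 ≤ RCLike.re (A i i) * RCLike.re (A j j) := by
  have hdet := (hA.submatrix ![i, j]).det_nonneg
  rw [det_fin_two] at hdet
  simp only [submatrix_apply, cons_val_zero, cons_val_one, sub_nonneg] at hdet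
  rw [← hA.isHermitian.apply j i, RCLike.star_def, RCLike.mul_conj,
    ← hA.isHermitian.coe_re_apply_self i, ← hA.isHermitian.coe_re_apply_self j] at hdet
  exact_mod_cast hdet

theorem isClosed_setOf_posSemidef [Fintype n] : IsClosed {A : Matrix n n 𝕜 | A.PosSemidef} := by
  simp only [posSemidef_iff_dotProduct_mulVec, Set.ofPred_and, Set.ofPred_forall]
  exact (isClosed_eq (by fun_prop) continuous_id).inter
    (isClosed_iInter fun x => isClosed_le continuous_const (by fun_prop))

theorem IsHermitian.norm_trace_mul [Fintype n] {A B : Matrix n n 𝕜} (hA : A.IsHermitian)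
    (hB : B.IsHermitian) : ‖(A * B).trace‖ = |RCLike.re (A * B).trace| := by
  have h : IsSelfAdjoint (A * B).trace := by
    rw [IsSelfAdjoint, ← trace_conjTranspose, conjTranspose_mul, hA.eq, hB.eq, trace_mul_comm]
  rw [← RCLike.norm_ofReal (K := 𝕜), ← (RCLike.re_eq_ofReal_of_isSelfAdjoint h).mp rfl]

theorem IsHermitian.posSemidef_smul_one_sub [Fintype n] [DecidableEq n] {M : Matrix n n 𝕜}
    (hM : M.IsHermitian) {c : ℝ} (hc : ∀ i, hM.eigenvalues i ≤ c) :
    ((c : 𝕜) • 1 - M).PosSemidef := by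
  set U := hM.eigenvectorUnitary
  have hdiag : (c : 𝕜) • 1 - M =
      Unitary.conjStarAlgAut 𝕜 _ U (diagonal fun i => ((c - hM.eigenvalues i : ℝ) : 𝕜)) := by
    conv_lhs => rw [hM.spectral_theorem]
    rw [← map_one (Unitary.conjStarAlgAut 𝕜 _ U), ← map_smul, ← map_sub]
    congr 1
    ext i j
    by_cases h : i = j <;> simp [h, RCLike.real_smul_eq_coe_mul]
  rw [hdiag, Unitary.conjStarAlgAut_apply, star_eq_conjTranspose]
  refine (PosSemidef.diagonal fun i => ?_).mul_mul_conjTranspose_same _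
  simpa using hc i

theorem isHermitian_one_add_sum_smul [Fintype n] [DecidableEq n] {ι : Type*} [Fintype ι]
    {F : ι → Matrix n n 𝕜} (hF : ∀ p, (F p).IsHermitian) (x : ι → ℝ) :
    (1 + ∑ p, (x p : 𝕜) • F p).IsHermitian :=
  isHermitian_one.add (isSelfAdjoint_sum _ fun p _ => (hF p).smul (RCLike.conj_ofReal _))

theorem re_trace_mul_one_add_sum [Fintype n] [DecidableEq n] {ι : Type*} [Fintype ι]
    {Z : Matrix n n 𝕜} (hZ : Z.trace = 1) (F : ι → Matrix n n 𝕜) (x : ι → ℝ) :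
    RCLike.re (Z * (1 + ∑ p, (x p : 𝕜) • F p)).trace =
      1 + ∑ p, x p * RCLike.re (Z * F p).trace := by
  simp [mul_add, Finset.mul_sum, trace_sum, hZ, RCLike.smul_re]

end Matrix

section DensityMatrices

variable (n 𝕜 : Type*) [Fintype n] [RCLike 𝕜]

def densityMatrices : Set (Matrix n n 𝕜) := {Z | Z.PosSemidef ∧ Z.trace = 1}

variable {n 𝕜}

theorem re_apply_self_le_one_of_mem_densityMatrices {Z : Matrix n n 𝕜}
    (hZ : Z ∈ densityMatrices n 𝕜) (i : n) : RCLike.re (Z i i) ≤ 1 := by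
  have hsum : ∑ k, RCLike.re (Z k k) = 1 := by
    simpa [trace, map_sum] using congrArg RCLike.re hZ.2
  rw [← hsum]
  exact Finset.single_le_sum (f := fun k => RCLike.re (Z k k))
    (fun k _ => (RCLike.nonneg_iff.mp hZ.1.diag_nonneg).1) (Finset.mem_univ i)

theorem norm_apply_le_one_of_mem_densityMatrices {Z : Matrix n n 𝕜}
    (hZ : Z ∈ densityMatrices n 𝕜) (i j : n) : ‖Z i j‖ ≤ 1 := by
  have hdiag k : 0 ≤ RCLike.re (Z k k) := (RCLike.nonneg_iff.mp hZ.1.diag_nonneg).1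
  have := hZ.1.norm_apply_sq_le i j
  have := mul_le_one₀ (re_apply_self_le_one_of_mem_densityMatrices hZ i) (hdiag j)
    (re_apply_self_le_one_of_mem_densityMatrices hZ j)
  nlinarith [norm_nonneg (Z i j)]

theorem isCompact_densityMatrices : IsCompact (densityMatrices n 𝕜) := by
  refine (isCompact_univ_pi fun _ => isCompact_univ_pi fun _ =>
    isCompact_closedBall (0 : 𝕜) 1).of_isClosed_subset ?_ fun Z hZ i _ j _ => ?_
  · exact isClosed_setOf_posSemidef.inter (isClosed_eq (by fun_prop) continuous_const)
  · simpa using norm_apply_le_one_of_mem_densityMatrices hZ i j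

theorem convex_densityMatrices : Convex ℝ (densityMatrices n 𝕜) := by
  rintro Z ⟨hZ, hZ1⟩ W ⟨hW, hW1⟩ a b ha hb hab
  refine ⟨(hZ.smul ha).add (hW.smul hb), ?_⟩
  simp [trace_add, trace_smul, hZ1, hW1, ← add_smul, hab]

theorem vecMulVec_star_mem_densityMatrices {v : n → 𝕜} (hv : v ⬝ᵥ star v = 1) :
    vecMulVec v (star v) ∈ densityMatrices n 𝕜 :=
  ⟨posSemidef_vecMulVec_self_star v, by rw [trace_vecMulVec, hv]⟩

theorem densityMatrices_nonempty [DecidableEq n] [Nonempty n] :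
    (densityMatrices n 𝕜).Nonempty := by
  obtain ⟨i⟩ := ‹Nonempty n›
  exact ⟨_, vecMulVec_star_mem_densityMatrices (v := Pi.single i 1) (by simp)⟩

theorem re_trace_mul_le_of_eigenvalues_le [DecidableEq n] {Z M : Matrix n n 𝕜}
    (hZ : Z ∈ densityMatrices n 𝕜) (hM : M.IsHermitian) {c : ℝ}
    (hc : ∀ i, hM.eigenvalues i ≤ c) : RCLike.re (Z * M).trace ≤ c := by
  have h := hZ.1.trace_mul_nonneg (hM.posSemidef_smul_one_sub hc)
  rw [mul_sub, trace_sub, mul_smul_comm, mul_one, trace_smul, hZ.2, smul_eq_mul, mul_one,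
    sub_nonneg] at h
  simpa using RCLike.re_le_re h

theorem exists_mem_densityMatrices_trace_mul_eq_eigenvalues [DecidableEq n] {M : Matrix n n 𝕜}
    (hM : M.IsHermitian) (i : n) :
    ∃ Z ∈ densityMatrices n 𝕜, (Z * M).trace = hM.eigenvalues i := by
  set v := (hM.eigenvectorBasis i).ofLp
  have hv : v ⬝ᵥ star v = 1 := by
    rw [← EuclideanSpace.inner_eq_star_dotProduct, inner_self_eq_norm_sq_to_K,
      hM.eigenvectorBasis.orthonormal.1 i]
    simp
  refine ⟨_, vecMulVec_star_mem_densityMatrices hv, ?_⟩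
  have hvM : star v ᵥ* M = star (M *ᵥ v) := by rw [star_mulVec, hM.eq]
  rw [vecMulVec_mul, trace_vecMulVec, hvM, hM.mulVec_eigenvectorBasis, star_smul,
    star_trivial, dotProduct_smul, hv, RCLike.real_smul_eq_coe_mul, mul_one]

noncomputable def reTraceMul {ι : Type*} (F : ι → Matrix n n 𝕜) : Matrix n n 𝕜 →ₗ[ℝ] ι → ℝ :=
  LinearMap.pi fun p => RCLike.reLm ∘ₗ traceLinearMap n ℝ 𝕜 ∘ₗ LinearMap.mulRight ℝ (F p)

end DensityMatrices

theorem eigenvalues_le_lamMax {N : ℕ} {M : Matrix (Fin N) (Fin N) ℂ} (hM : M.IsHermitian)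
    (i : Fin N) : hM.eigenvalues i ≤ lamMax hM :=
  le_ciSup (Set.finite_range _).bddAbove i

theorem exists_mem_densityMatrices_trace_mul_eq_lamMax {N : ℕ} (hN : 0 < N)
    {M : Matrix (Fin N) (Fin N) ℂ} (hM : M.IsHermitian) :
    ∃ Z ∈ densityMatrices (Fin N) ℂ, (Z * M).trace = lamMax hM := by
  have : Nonempty (Fin N) := ⟨⟨0, hN⟩⟩
  obtain ⟨i, hi⟩ := exists_eq_ciSup_of_finite (f := hM.eigenvalues)
  rw [lamMax, ← hi]
  exact exists_mem_densityMatrices_trace_mul_eq_eigenvalues hM i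

theorem one_sub_sum_abs_le_lamMax {N : ℕ} {ι : Type*} [Fintype ι]
    {F : ι → Matrix (Fin N) (Fin N) ℂ} {x : ι → ℝ} (hx : ∀ p, |x p| ≤ 1)
    (hM : (1 + ∑ p, (x p : ℂ) • F p).IsHermitian) {Z : Matrix (Fin N) (Fin N) ℂ}
    (hZ : Z ∈ densityMatrices (Fin N) ℂ) : 1 - ∑ p, |reTraceMul F Z p| ≤ lamMax hM := by
  have hpair p : -|reTraceMul F Z p| ≤ x p * reTraceMul F Z p := by
    have := neg_abs_le (x p * reTraceMul F Z p)
    rw [abs_mul] at this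
    nlinarith [hx p, abs_nonneg (reTraceMul F Z p)]
  have hsum : -∑ p, |reTraceMul F Z p| ≤ ∑ p, x p * reTraceMul F Z p := by
    rw [← Finset.sum_neg_distrib]
    exact Finset.sum_le_sum fun p _ => hpair p
  calc 1 - ∑ p, |reTraceMul F Z p| ≤ 1 + ∑ p, x p * reTraceMul F Z p := by linarith
    _ = RCLike.re (Z * (1 + ∑ p, (x p : ℂ) • F p)).trace :=
        (re_trace_mul_one_add_sum hZ.2 F x).symm
    _ ≤ lamMax hM := re_trace_mul_le_of_eigenvalues_le hZ hM (eigenvalues_le_lamMax hM)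

theorem exists_mem_densityMatrices_lamMax_eq_one_add_sum {N : ℕ} (hN : 0 < N) {ι : Type*}
    [Fintype ι] {F : ι → Matrix (Fin N) (Fin N) ℂ} {x : ι → ℝ}
    (hM : (1 + ∑ p, (x p : ℂ) • F p).IsHermitian) :
    ∃ Z ∈ densityMatrices (Fin N) ℂ, lamMax hM = 1 + ∑ p, x p * (reTraceMul F Z p : ℝ) := by
  obtain ⟨Z, hZ, hZM⟩ := exists_mem_densityMatrices_trace_mul_eq_lamMax hN hM
  refine ⟨Z, hZ, .trans ?_ (re_trace_mul_one_add_sum hZ.2 F x)⟩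
  simpa using congrArg Complex.re hZM.symm

/-- min_{x ∈ [-1,1]^D} λ_max(I + ∑_p x_p F_p)
= max over density matrices Z of (1 − ∑_p |Tr(Z F_p)|), both attained. -/
theorem minimax_duality_box (D N : ℕ) (hN : 0 < N)
    (F : Fin D → Matrix (Fin N) (Fin N) ℂ) (hF : ∀ p, (F p).IsHermitian) :
    ∃ v : ℝ,
      IsLeast {w : ℝ | ∃ x : Fin D → ℝ, (∀ p, x p ∈ Set.Icc (-1 : ℝ) 1) ∧
          ∃ h : ((1 : Matrix (Fin N) (Fin N) ℂ) + ∑ p, (x p : ℂ) • F p).IsHermitian,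
            lamMax h = w} v ∧
      IsGreatest {w : ℝ | ∃ Z : Matrix (Fin N) (Fin N) ℂ,
          Z.IsHermitian ∧ Z.PosSemidef ∧ Z.trace = 1 ∧
          w = 1 - ∑ p, ‖(Z * F p).trace‖} v := by
  have : Nonempty (Fin N) := ⟨⟨0, hN⟩⟩
  set φ := reTraceMul F
  have hM (x : Fin D → ℝ) : ((1 : Matrix (Fin N) (Fin N) ℂ) + ∑ p, (x p : ℂ) • F p).IsHermitian :=
    isHermitian_one_add_sum_smul hF x
  obtain ⟨Z₀, hZ₀, hmin⟩ := isCompact_densityMatrices.exists_isMinOn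
    (f := fun Z => ∑ p, |φ Z p|) densityMatrices_nonempty
    (continuous_finsetSum _ fun p _ =>
      ((continuous_apply p).comp φ.continuous_of_finiteDimensional).abs).continuousOn
  obtain ⟨x, hx, hxφ⟩ := exists_abs_le_one_sum_mul_le_neg
    (convex_densityMatrices.linear_image φ) (r := ∑ p, |φ Z₀ p|)
    (by rintro _ ⟨Z, hZ, rfl⟩; exact hmin hZ)
  have hnorm {Z} (hZ : Z ∈ densityMatrices (Fin N) ℂ) :
      ∑ p, ‖(Z * F p).trace‖ = ∑ p, |φ Z p| :=
    Finset.sum_congr rfl fun p _ => hZ.1.isHermitian.norm_trace_mul (hF p)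
  refine ⟨1 - ∑ p, |φ Z₀ p|, ⟨⟨x, fun p => abs_le.mp (hx p), hM x, le_antisymm ?_ ?_⟩, ?_⟩,
    ⟨Z₀, hZ₀.1.isHermitian, hZ₀.1, hZ₀.2, by rw [hnorm hZ₀]⟩, ?_⟩
  · obtain ⟨Z, hZ, hZM⟩ := exists_mem_densityMatrices_lamMax_eq_one_add_sum hN (hM x)
    rw [hZM]
    linarith [hxφ _ ⟨Z, hZ, rfl⟩]
  · exact one_sub_sum_abs_le_lamMax hx (hM x) hZ₀
  · rintro w ⟨y, hy, h, rfl⟩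
    exact one_sub_sum_abs_le_lamMax (fun p => abs_le.mpr (hy p)) h hZ₀
  · rintro w ⟨Z, -, hZ, hZ1, rfl⟩
    rw [hnorm ⟨hZ, hZ1⟩]
    linarith [isMinOn_iff.mp hmin Z ⟨hZ, hZ1⟩]
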